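/- arXiv:0801.2021 — 6 statements merged into one kernel-verified Lean document; each statement's English description precedes it below -/
import Mathlib

section
/- Let q be a prime power and A, B nonempty subsets of the finite field F_q. Then there exists ξ ∈ F_q \ {0} such that |A + ξ·B| ≥ |A||B|(q-1) / (|A||B| - (|A|+|B|) + q), where A + ξ·B = {a + ξb : a ∈ A, b ∈ B}. -/
/-!
By Cauchy–Schwarz, `(|A||B|)² ≤ |A + ξB| · E(A, ξB)` for every `ξ ≠ 0`, where `E` is the additive
energy. Summing the energy over all `ξ ≠ 0` counts, for each quadruple `(a₁, a₂, b₁, b₂)`, the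
nonzero solutions of `a₁ - a₂ = ξ (b₂ - b₁)`: there are `q - 1` on the diagonal `a₁ = a₂, b₁ = b₂`,
one when `a₁ ≠ a₂` and `b₁ ≠ b₂`, and none otherwise. So the average energy is
`|A||B|(q - 1 + (|A| - 1)(|B| - 1)) / (q - 1)`, and a `ξ` of at most average energy gives the bound.
-/

open Pointwise

open Finset

namespace Finset

variable {F : Type*} [Field F] [DecidableEq F]

lemma addEnergy_smul_finset (A B : Finset F) {ξ : F} (hξ : ξ ≠ 0) :
    addEnergy A (ξ • B) =
      #{x ∈ (A ×ˢ A) ×ˢ B ×ˢ B | x.1.1 + ξ * x.2.1 = x.1.2 + ξ * x.2.2} := by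
  refine card_nbij' (fun x => (x.1, ξ⁻¹ * x.2.1, ξ⁻¹ * x.2.2))
    (fun x => (x.1, ξ * x.2.1, ξ * x.2.2)) ?_ ?_ ?_ ?_
  · rintro ⟨⟨a₁, a₂⟩, c₁, c₂⟩ hx
    simp only [coe_filter, Set.mem_ofPred_eq, mem_product, mem_smul_finset, smul_eq_mul] at hx ⊢
    obtain ⟨⟨⟨ha₁, ha₂⟩, ⟨b₁, hb₁, rfl⟩, ⟨b₂, hb₂, rfl⟩⟩, h⟩ := hx
    simpa [inv_mul_cancel_left₀ hξ, ha₁, ha₂, hb₁, hb₂] using h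
  · rintro ⟨⟨a₁, a₂⟩, b₁, b₂⟩ hx
    simp only [coe_filter, Set.mem_ofPred_eq, mem_product, mem_smul_finset, smul_eq_mul] at hx ⊢
    exact ⟨⟨hx.1.1, ⟨b₁, hx.1.2.1, rfl⟩, ⟨b₂, hx.1.2.2, rfl⟩⟩, hx.2⟩
  · intro x _
    simp [mul_inv_cancel_left₀ hξ]
  · intro x _
    simp [inv_mul_cancel_left₀ hξ]

lemma card_filter_add_mul_eq_add_mul [Fintype F] (a₁ a₂ b₁ b₂ : F) :
    #{ξ ∈ univ.erase 0 | a₁ + ξ * b₁ = a₂ + ξ * b₂} =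
      (if a₁ = a₂ ∧ b₁ = b₂ then Fintype.card F - 1 else 0) +
        if a₁ ≠ a₂ ∧ b₁ ≠ b₂ then 1 else 0 := by
  by_cases ha : a₁ = a₂ <;> by_cases hb : b₁ = b₂
  · simp [ha, hb, filter_true_of_mem, card_erase_of_mem]
  · simp [ha, hb, filter_false_of_mem]
  · simp [ha, hb, filter_false_of_mem]
  · rw [if_neg (fun h => ha h.1), if_pos ⟨ha, hb⟩, zero_add, card_eq_one]
    refine ⟨(a₂ - a₁) / (b₁ - b₂), ?_⟩
    ext ξ
    have hb' : b₁ - b₂ ≠ 0 := sub_ne_zero.2 hb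
    simp only [mem_filter, mem_erase, mem_univ, and_true, mem_singleton]
    constructor
    · rintro ⟨-, h⟩
      field_simp
      linear_combination h
    · rintro rfl
      refine ⟨div_ne_zero (sub_ne_zero.2 (Ne.symm ha)) hb', ?_⟩
      field_simp
      ring

lemma sum_addEnergy_smul_finset [Fintype F] (A B : Finset F) :
    ∑ ξ ∈ univ.erase (0 : F), addEnergy A (ξ • B) =
      #A * #B * (Fintype.card F - 1 + (#A - 1) * (#B - 1)) := by
  calc ∑ ξ ∈ univ.erase 0, addEnergy A (ξ • B)
      = ∑ ξ ∈ univ.erase 0,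
          #{x ∈ (A ×ˢ A) ×ˢ B ×ˢ B | x.1.1 + ξ * x.2.1 = x.1.2 + ξ * x.2.2} :=
        sum_congr rfl fun ξ hξ => addEnergy_smul_finset A B (ne_of_mem_erase hξ)
    _ = ∑ x ∈ (A ×ˢ A) ×ˢ B ×ˢ B,
          #{ξ ∈ univ.erase 0 | x.1.1 + ξ * x.2.1 = x.1.2 + ξ * x.2.2} := by
        simp only [card_filter]
        exact sum_comm
    _ = #(A.diag ×ˢ B.diag) * (Fintype.card F - 1) + #(A.offDiag ×ˢ B.offDiag) := by
        simp only [card_filter_add_mul_eq_add_mul, sum_add_distrib, sum_ite, sum_const,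
          smul_eq_mul, mul_zero, add_zero, mul_one]
        congr 3 <;> ext <;> grind
    _ = _ := by
        simp only [card_product, diag_card, offDiag_card, ← Nat.mul_sub_one]
        ring

theorem exists_ne_zero_card_mul_card_mul_le_card_add_smul_mul [Fintype F] (A B : Finset F) :
    ∃ ξ ≠ (0 : F), #A * #B * (Fintype.card F - 1) ≤
      #(A + ξ • B) * (Fintype.card F - 1 + (#A - 1) * (#B - 1)) := by
  set q := Fintype.card F
  set D := q - 1 + (#A - 1) * (#B - 1)
  obtain ⟨ξ, hξ, hmin⟩ :=
    exists_min_image (univ.erase (0 : F)) (fun ξ => addEnergy A (ξ • B)) ⟨1, by simp⟩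
  have hξ0 : ξ ≠ 0 := ne_of_mem_erase hξ
  refine ⟨ξ, hξ0, ?_⟩
  have energy_le : (q - 1) * addEnergy A (ξ • B) ≤ #A * #B * D := by
    simpa [card_erase_of_mem, sum_addEnergy_smul_finset, q] using
      card_nsmul_le_sum _ _ _ hmin
  have cauchy_schwarz : (#A * #B) ^ 2 ≤ #(A + ξ • B) * addEnergy A (ξ • B) := by
    simpa [card_smul_finset₀ hξ0, mul_pow] using le_card_add_mul_addEnergy A (ξ • B)
  rcases (#A * #B).eq_zero_or_pos with h0 | hpos
  · simp [h0]
  refine Nat.le_of_mul_le_mul_left ?_ hpos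
  calc #A * #B * (#A * #B * (q - 1)) = (#A * #B) ^ 2 * (q - 1) := by ring
    _ ≤ #(A + ξ • B) * addEnergy A (ξ • B) * (q - 1) := by gcongr
    _ = #(A + ξ • B) * ((q - 1) * addEnergy A (ξ • B)) := by ring
    _ ≤ #(A + ξ • B) * (#A * #B * D) := by gcongr
    _ = #A * #B * (#(A + ξ • B) * D) := by ring

end Finset

theorem stmt_0_general {F : Type*} [Field F] [Fintype F]
    (A B : Set F) :
    ∃ ξ : F, ξ ≠ 0 ∧
      ((A + ξ • B).ncard : ℝ) ≥
        (A.ncard * B.ncard * (Fintype.card F - 1)) /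
          (A.ncard * B.ncard - (A.ncard + B.ncard) + Fintype.card F) := by
  classical
  obtain ⟨ξ, hξ, hle⟩ :=
    Finset.exists_ne_zero_card_mul_card_mul_le_card_add_smul_mul A.toFinset B.toFinset
  refine ⟨ξ, hξ, ?_⟩
  have hsum : A + ξ • B = ↑(A.toFinset + ξ • B.toFinset) := by simp
  rw [hsum, Set.ncard_coe_finset, Set.ncard_eq_toFinset_card', Set.ncard_eq_toFinset_card']
  set m := #A.toFinset
  set n := #B.toFinset
  set k := #(A.toFinset + ξ • B.toFinset)
  rcases Nat.eq_zero_or_pos m with hm | hm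
  · simp [hm]
  rcases Nat.eq_zero_or_pos n with hn | hn
  · simp [hn]
  have hq : 1 < Fintype.card F := Fintype.one_lt_card
  have hle' := (Nat.cast_le (α := ℝ)).2 hle
  push_cast [Nat.cast_sub hm, Nat.cast_sub hn, Nat.cast_sub hq.le] at hle'
  have hD : (m * n - (m + n) + Fintype.card F : ℝ) = Fintype.card F - 1 + (m - 1) * (n - 1) := by
    ring
  have hm' : (1 : ℝ) ≤ m := by exact_mod_cast hm
  have hn' : (1 : ℝ) ≤ n := by exact_mod_cast hn
  have hq' : (1 : ℝ) < Fintype.card F := by exact_mod_cast hq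
  rw [hD, ge_iff_le, div_le_iff₀ (by nlinarith)]
  exact hle'

theorem stmt_0 {F : Type*} [Field F] [Fintype F]
    (A B : Set F) (hA : A.Nonempty) (hB : B.Nonempty) :
    ∃ ξ : F, ξ ≠ 0 ∧
      ((A + ξ • B).ncard : ℝ) ≥
        (A.ncard * B.ncard * (Fintype.card F - 1)) /
          (A.ncard * B.ncard - (A.ncard + B.ncard) + Fintype.card F) :=
  stmt_0_general A B
end

section
/- Let q be a prime power and A, B nonempty subsets of the finite field F_q. Then there exists ξ ∈ F_q \ {0} such that |A - ξ·B| ≥ |A||B|(q-1) / (|A||B| - (|A|+|B|) + q), where A - ξ·B = {a - ξb : a ∈ A, b ∈ B}. -/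
open Pointwise Finset

theorem stmt_1 {F : Type*} [Field F] [Fintype F]
    (A B : Set F) (hA : A.Nonempty) (hB : B.Nonempty) :
    ∃ ξ : F, ξ ≠ 0 ∧
      ((A - ξ • B).ncard : ℝ) ≥
        (A.ncard * B.ncard * (Fintype.card F - 1)) /
          (A.ncard * B.ncard - (A.ncard + B.ncard) + Fintype.card F) := by
  classical
  obtain ⟨A', rfl⟩ : ∃ s : Finset F, (↑s : Set F) = A :=
    ⟨A.toFinite.toFinset, A.toFinite.coe_toFinset⟩
  obtain ⟨B', rfl⟩ : ∃ s : Finset F, (↑s : Set F) = B :=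
    ⟨B.toFinite.toFinset, B.toFinite.coe_toFinset⟩
  have hA0 : A'.Nonempty := by exact_mod_cast hA
  have hB0 : B'.Nonempty := by exact_mod_cast hB
  set q := Fintype.card F with hqdef
  set a := A'.card with hadef
  set b := B'.card with hbdef
  have ha1 : 1 ≤ a := hA0.card_pos
  have hb1 : 1 ≤ b := hB0.card_pos
  have hq2 : 2 ≤ q := Fintype.one_lt_card
  set f : F → F × F → F := fun ξ p => p.1 - ξ * p.2 with hf
  set s : Finset (F × F) := A' ×ˢ B' with hs
  have hscard : s.card = a * b := card_product _ _
  set T : Finset F := Finset.univ.erase (0 : F) with hT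
  have hTcard : T.card = q - 1 := by
    rw [hT, card_erase_of_mem (mem_univ _), card_univ]
  set E : F → ℕ := fun ξ => #{p ∈ s ×ˢ s | f ξ p.1 = f ξ p.2} with hE
  -- Cauchy–Schwarz
  have hCS : ∀ ξ : F, (a * b) ^ 2 ≤ (s.image (f ξ)).card * E ξ := by
    intro ξ
    have h1 : a * b = ∑ y ∈ s.image (f ξ), #{p ∈ s | f ξ p = y} := by
      rw [← hscard]; exact card_eq_sum_card_image _ _
    have h3 : E ξ = ∑ y ∈ s.image (f ξ), (#{p ∈ s | f ξ p = y}) ^ 2 := by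
      have h4 : E ξ = ∑ x ∈ s, #{y ∈ s | f ξ y = f ξ x} := by
        show #{p ∈ s ×ˢ s | f ξ p.1 = f ξ p.2} = _
        rw [card_filter, sum_product]
        refine sum_congr rfl fun x _ => ?_
        rw [card_filter]
        exact sum_congr rfl fun y _ => by simp [eq_comm]
      rw [h4, sum_comp (fun c => #{y ∈ s | f ξ y = c}) (f ξ)]
      simp [sq, smul_eq_mul]
    calc (a * b) ^ 2 = (∑ y ∈ s.image (f ξ), #{p ∈ s | f ξ p = y}) ^ 2 := by rw [← h1]
      _ ≤ (s.image (f ξ)).card * ∑ y ∈ s.image (f ξ), (#{p ∈ s | f ξ p = y}) ^ 2 :=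
          sq_sum_le_card_mul_sum_sq
      _ = (s.image (f ξ)).card * E ξ := by rw [← h3]
  -- the key counting of ξ's per quadruple
  have hkey : ∀ a₁ a₂ b₁ b₂ : F,
      #{ξ ∈ T | a₁ - ξ * b₁ = a₂ - ξ * b₂} =
        if b₁ = b₂ then (if a₁ = a₂ then q - 1 else 0) else (if a₁ = a₂ then 0 else 1) := by
    intro a₁ a₂ b₁ b₂
    by_cases hb : b₁ = b₂
    · subst hb
      by_cases ha : a₁ = a₂
      · subst ha
        rw [if_pos rfl, if_pos rfl, filter_true_of_mem fun x _ => rfl]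
        exact hTcard
      · rw [if_pos rfl, if_neg ha]
        rw [filter_false_of_mem, card_empty]
        intro ξ _ h
        exact ha (by linear_combination h)
    · rw [if_neg hb]
      have hbne : b₁ - b₂ ≠ 0 := sub_ne_zero.mpr hb
      set ξ₀ : F := (a₁ - a₂) * (b₁ - b₂)⁻¹ with hξ₀
      have hcond : ∀ ξ : F, (a₁ - ξ * b₁ = a₂ - ξ * b₂) ↔ ξ = ξ₀ := by
        intro ξ
        rw [hξ₀, eq_mul_inv_iff_mul_eq₀ hbne]
        constructor
        · intro h; linear_combination -h
        · intro h; linear_combination -h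
      have hfe : {ξ ∈ T | a₁ - ξ * b₁ = a₂ - ξ * b₂} = {ξ ∈ T | ξ = ξ₀} := by
        ext ξ; simp only [mem_filter, hcond]
      rw [hfe]
      by_cases ha : a₁ = a₂
      · rw [if_pos ha]
        rw [filter_false_of_mem, card_empty]
        intro ξ hξ h
        rw [hT, mem_erase] at hξ
        exact hξ.1 (h.trans (by rw [hξ₀, ha, sub_self, zero_mul]))
      · rw [if_neg ha]
        have hξ₀ne : ξ₀ ≠ 0 := by
          rw [hξ₀]
          exact mul_ne_zero (sub_ne_zero.mpr ha) (inv_ne_zero hbne)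
        have hsing : {ξ ∈ T | ξ = ξ₀} = {ξ₀} := by
          ext x
          simp only [mem_filter, mem_singleton, hT, mem_erase, mem_univ, and_true, true_and]
          constructor
          · exact fun h => h.2
          · rintro rfl; exact ⟨hξ₀ne, rfl⟩
        rw [hsing, card_singleton]
  -- swap the sums
  have hswap : ∑ ξ ∈ T, E ξ = ∑ p ∈ s ×ˢ s, #{ξ ∈ T | f ξ p.1 = f ξ p.2} := by
    simp only [hE, card_filter]
    exact sum_comm
  -- inner double sum over B'
  have hinner : ∀ a₁ a₂ : F, (∑ b₁ ∈ B', ∑ b₂ ∈ B',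
      (if b₁ = b₂ then (if a₁ = a₂ then q - 1 else 0) else (if a₁ = a₂ then 0 else 1)))
      = if a₁ = a₂ then b * (q - 1) else b * (b - 1) := by
    intro a₁ a₂
    by_cases ha : a₁ = a₂
    · simp only [if_pos ha]
      rw [sum_congr rfl fun b₁ hb₁ => ?_, sum_const, smul_eq_mul]
      rw [sum_ite_eq, if_pos hb₁]
    · simp only [if_neg ha]
      rw [sum_congr rfl fun b₁ hb₁ => ?_, sum_const, smul_eq_mul]
      have : ∀ b₂ : F, (if b₁ = b₂ then 0 else 1) = if b₁ ≠ b₂ then 1 else 0 := by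
        intro b₂; by_cases h : b₁ = b₂ <;> simp [h]
      simp only [this]
      rw [← card_filter, filter_ne, card_erase_of_mem hb₁]
  -- the quadruple sum
  have hsum : ∑ p ∈ s ×ˢ s, #{ξ ∈ T | f ξ p.1 = f ξ p.2}
      = a * (b * (q - 1) + (a - 1) * (b * (b - 1))) := by
    rw [sum_product]
    rw [hs]
    simp only [sum_product, hf, hkey]
    rw [sum_congr rfl fun a₁ ha₁ => ?_, sum_const, smul_eq_mul]
    rw [sum_comm]
    rw [sum_congr rfl fun a₂ ha₂ => hinner a₁ a₂]
    rw [← add_sum_erase _ _ ha₁, if_pos rfl]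
    congr 1
    rw [sum_congr rfl fun a₂ ha₂ => if_neg (Ne.symm (mem_erase.mp ha₂).1),
      sum_const, smul_eq_mul, card_erase_of_mem ha₁]
  have htotal : ∑ ξ ∈ T, E ξ = a * (b * (q - 1) + (a - 1) * (b * (b - 1))) :=
    hswap.trans hsum
  -- pigeonhole
  have hTne : T.Nonempty := by
    obtain ⟨x, hx⟩ := exists_ne (0 : F)
    exact ⟨x, by simp [hT, hx]⟩
  have hpig : ∃ ξ ∈ T, (q - 1) * E ξ ≤ a * (b * (q - 1) + (a - 1) * (b * (b - 1))) := by
    refine exists_le_of_sum_le hTne ?_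
    rw [← mul_sum, htotal, sum_const, smul_eq_mul, hTcard]
  obtain ⟨ξ, hξT, hξle⟩ := hpig
  have hξ0 : ξ ≠ 0 := (mem_erase.mp hξT).1
  refine ⟨ξ, hξ0, ?_⟩
  have hKset : (↑A' - ξ • ↑B' : Set F) = ↑(s.image (f ξ)) := by
    ext y
    simp only [Set.mem_sub, Set.mem_smul_set, coe_image, Set.mem_image, mem_coe, hs, hf,
      mem_product, smul_eq_mul]
    constructor
    · rintro ⟨u, hu, v, ⟨w, hw, rfl⟩, rfl⟩
      exact ⟨(u, w), ⟨hu, hw⟩, rfl⟩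
    · rintro ⟨⟨u, w⟩, ⟨hu, hw⟩, rfl⟩
      exact ⟨u, hu, ξ * w, ⟨w, hw, rfl⟩, rfl⟩
  rw [hKset, Set.ncard_coe_finset, Set.ncard_coe_finset, Set.ncard_coe_finset,
    ← hadef, ← hbdef]
  set K := (s.image (f ξ)).card with hKdef
  -- cast to the reals
  have hq1 : 1 ≤ q := by omega
  have h1R : ((a : ℝ) * b) ^ 2 ≤ K * E ξ := by exact_mod_cast hCS ξ
  have h2R : ((q : ℝ) - 1) * E ξ ≤
      (a : ℝ) * ((b : ℝ) * ((q : ℝ) - 1) + ((a : ℝ) - 1) * ((b : ℝ) * ((b : ℝ) - 1))) := by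
    have h := (Nat.cast_le (α := ℝ)).mpr hξle
    push_cast [Nat.cast_sub hq1, Nat.cast_sub ha1, Nat.cast_sub hb1] at h
    convert h using 2
  have hKnn : (0 : ℝ) ≤ K := Nat.cast_nonneg _
  have haR : (1 : ℝ) ≤ a := by exact_mod_cast ha1
  have hbR : (1 : ℝ) ≤ b := by exact_mod_cast hb1
  have hqR : (2 : ℝ) ≤ q := by exact_mod_cast hq2
  have hD : (0 : ℝ) < (a : ℝ) * b - ((a : ℝ) + b) + q := by nlinarith
  rw [ge_iff_le, div_le_iff₀ hD]
  have hab : (0 : ℝ) < (a : ℝ) * b := by nlinarith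
  have key : (a : ℝ) * b * ((q : ℝ) - 1) * ((a : ℝ) * b) ≤
      (K : ℝ) * ((a : ℝ) * b - ((a : ℝ) + b) + q) * ((a : ℝ) * b) := by
    nlinarith [mul_le_mul_of_nonneg_right h1R (by linarith : (0 : ℝ) ≤ (q : ℝ) - 1),
      mul_le_mul_of_nonneg_left h2R hKnn]
  exact le_of_mul_le_mul_right key hab
end

section
/- Let q be a prime power and A, B nonempty subsets of the finite field F_q with |A||B| > q. Then there exists ξ ∈ F_q \ {0} such that both |A + ξ·B| > q/2 and |A - ξ·B| > q/2. -/
open Pointwise Finset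

/-! Let `E(ξ)` count the solutions of `a + ξ b = a' + ξ b'` with `a, a' ∈ A`, `b, b' ∈ B`; for
`ξ ≠ 0` it is the additive energy of `A` and `ξ • B`, and `E(-ξ) = E(ξ)`. Cauchy–Schwarz gives
`(|A||B|)² ≤ |A ± ξ B| E(ξ)`. A solution with `a ≠ a'` has `b ≠ b'` and determines
`ξ = (a' - a) / (b - b')`, so `∑_{ξ ≠ 0} E(ξ) ≤ (q - 1)|A||B| + |A|(|A| - 1)|B|(|B| - 1)`.
Averaging, `|A||B| > q` yields some `ξ ≠ 0` with `q E(ξ) < 2 (|A||B|)²`, and then both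
`|A ± ξ B| > q / 2`. -/

namespace Finset

variable {F : Type*} [Field F] [DecidableEq F]

def lineEnergy (A B : Finset F) (ξ : F) : ℕ :=
  #{x ∈ (A ×ˢ A) ×ˢ B ×ˢ B | x.1.1 + ξ * x.2.1 = x.1.2 + ξ * x.2.2}

lemma addEnergy_smul_finset_eq_lineEnergy {ξ : F} (hξ : ξ ≠ 0) (A B : Finset F) :
    addEnergy A (ξ • B) = lineEnergy A B ξ := by
  symm
  refine card_nbij' (fun x ↦ (x.1, ξ * x.2.1, ξ * x.2.2))
    (fun x ↦ (x.1, ξ⁻¹ * x.2.1, ξ⁻¹ * x.2.2)) ?_ ?_ ?_ ?_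
  · rintro ⟨⟨a₁, a₂⟩, b₁, b₂⟩ h
    simp only [mem_coe, mem_filter, mem_product] at h ⊢
    exact ⟨⟨h.1.1, smul_mem_smul_finset h.1.2.1, smul_mem_smul_finset h.1.2.2⟩, h.2⟩
  · rintro ⟨⟨a₁, a₂⟩, t₁, t₂⟩ h
    simp only [mem_coe, mem_filter, mem_product, mem_smul_finset, smul_eq_mul] at h ⊢
    obtain ⟨⟨ha, ⟨b₁, hb₁, rfl⟩, ⟨b₂, hb₂, rfl⟩⟩, h⟩ := h
    simp only [inv_mul_cancel_left₀ hξ]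
    exact ⟨⟨ha, hb₁, hb₂⟩, h⟩
  · rintro ⟨⟨a₁, a₂⟩, b₁, b₂⟩ -
    simp [inv_mul_cancel_left₀ hξ]
  · rintro ⟨⟨a₁, a₂⟩, t₁, t₂⟩ -
    simp [mul_inv_cancel_left₀ hξ]

lemma lineEnergy_neg (A B : Finset F) (ξ : F) : lineEnergy A B (-ξ) = lineEnergy A B ξ := by
  refine card_nbij' (fun x ↦ (x.1, x.2.2, x.2.1)) (fun x ↦ (x.1, x.2.2, x.2.1)) ?_ ?_
    (fun _ _ ↦ rfl) (fun _ _ ↦ rfl)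
  all_goals
    rintro ⟨⟨a₁, a₂⟩, b₁, b₂⟩ h
    simp only [mem_coe, mem_filter, mem_product] at h ⊢
    exact ⟨⟨h.1.1, h.1.2.2, h.1.2.1⟩, by linear_combination h.2⟩

lemma sq_card_mul_card_le_card_add_smul_mul_lineEnergy {ξ : F} (hξ : ξ ≠ 0) (A B : Finset F) :
    (#A * #B) ^ 2 ≤ #(A + ξ • B) * lineEnergy A B ξ := by
  rw [← addEnergy_smul_finset_eq_lineEnergy hξ, mul_pow, ← card_smul_finset₀ hξ B]
  exact le_card_add_mul_addEnergy A (ξ • B)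

lemma sq_card_mul_card_le_card_sub_smul_mul_lineEnergy {ξ : F} (hξ : ξ ≠ 0) (A B : Finset F) :
    (#A * #B) ^ 2 ≤ #(A - ξ • B) * lineEnergy A B ξ := by
  rw [sub_eq_add_neg, ← neg_smul_finset, ← lineEnergy_neg]
  exact sq_card_mul_card_le_card_add_smul_mul_lineEnergy (neg_ne_zero.2 hξ) A B

lemma lineEnergy_le {ξ : F} (hξ : ξ ≠ 0) (A B : Finset F) :
    lineEnergy A B ξ ≤ #A * #B +
      #{x ∈ A.offDiag ×ˢ B.offDiag | x.1.1 + ξ * x.2.1 = x.1.2 + ξ * x.2.2} := by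
  rw [← diag_card A, ← diag_card B, ← card_product]
  refine (card_le_card fun x hx ↦ ?_).trans (card_union_le _ _)
  obtain ⟨⟨a₁, a₂⟩, b₁, b₂⟩ := x
  simp only [mem_filter, mem_product] at hx
  obtain ⟨⟨⟨ha₁, ha₂⟩, hb₁, hb₂⟩, h⟩ := hx
  simp only [mem_union, mem_filter, mem_product, mem_diag, mem_offDiag]
  by_cases ha : a₁ = a₂
  · subst ha
    have hb : b₁ = b₂ := mul_left_cancel₀ hξ (add_left_cancel h)
    exact Or.inl ⟨⟨ha₁, rfl⟩, hb₁, hb⟩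
  · have hb : b₁ ≠ b₂ := by
      rintro rfl
      exact ha (add_right_cancel h)
    exact Or.inr ⟨⟨⟨ha₁, ha₂, ha⟩, hb₁, hb₂, hb⟩, h⟩

lemma sum_card_filter_offDiag_le [Fintype F] (A B : Finset F) :
    ∑ ξ ∈ univ.erase 0, #{x ∈ A.offDiag ×ˢ B.offDiag | x.1.1 + ξ * x.2.1 = x.1.2 + ξ * x.2.2}
      ≤ #A.offDiag * #B.offDiag := by
  have hswap := sum_card_bipartiteAbove_eq_sum_card_bipartiteBelow (s := univ.erase (0 : F))
    (t := A.offDiag ×ˢ B.offDiag) (r := fun ξ x ↦ x.1.1 + ξ * x.2.1 = x.1.2 + ξ * x.2.2)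
  simp only [bipartiteAbove] at hswap
  rw [hswap, ← card_product, ← mul_one #(_ ×ˢ _), ← smul_eq_mul]
  refine sum_le_card_nsmul _ _ _ fun x hx ↦ card_le_one.2 fun ξ hξ ζ hζ ↦ ?_
  simp only [mem_product, mem_offDiag] at hx
  simp only [mem_bipartiteBelow] at hξ hζ
  have hb : x.2.1 - x.2.2 ≠ 0 := sub_ne_zero.2 hx.2.2.2
  exact mul_right_cancel₀ hb (by linear_combination hξ.2 - hζ.2)

lemma sum_lineEnergy_le [Fintype F] (A B : Finset F) :
    ∑ ξ ∈ univ.erase 0, lineEnergy A B ξ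
      ≤ (Fintype.card F - 1) * (#A * #B) + #A.offDiag * #B.offDiag := by
  calc ∑ ξ ∈ univ.erase 0, lineEnergy A B ξ
      ≤ ∑ ξ ∈ univ.erase 0, (#A * #B +
          #{x ∈ A.offDiag ×ˢ B.offDiag | x.1.1 + ξ * x.2.1 = x.1.2 + ξ * x.2.2}) :=
        sum_le_sum fun ξ hξ ↦ lineEnergy_le (ne_of_mem_erase hξ) A B
    _ ≤ _ := by
      rw [sum_add_distrib, sum_const, card_erase_of_mem (mem_univ _), card_univ, smul_eq_mul]
      exact Nat.add_le_add_left (sum_card_filter_offDiag_le A B) _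

/-- With `x = #A`, `y = #B`: the bound of `sum_lineEnergy_le` is too small for
`2 (x y)² ≤ q · lineEnergy A B ξ` to hold at all `q - 1` nonzero `ξ`. -/
lemma card_mul_energy_sum_bound_lt {q x y : ℕ} (hq : 2 ≤ q) (hxy : q < x * y) :
    q * ((q - 1) * (x * y) + (x * x - x) * (y * y - y)) < (q - 1) * (2 * (x * y) ^ 2) := by
  have hx : 1 ≤ x := Nat.pos_of_ne_zero (by rintro rfl; simp at hxy)
  have hy : 1 ≤ y := Nat.pos_of_ne_zero (by rintro rfl; simp at hxy)
  zify [hq.trans' one_le_two, Nat.le_mul_self x, Nat.le_mul_self y] at hxy ⊢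
  have hxy3 : (3 : ℤ) ≤ x + y := by nlinarith [sq_nonneg ((x : ℤ) - y)]
  have key : 0 < ((q : ℤ) - 2) * (x * y) - q ^ 2 + q * (x + y) := by
    nlinarith [mul_nonneg (by linarith : (0 : ℤ) ≤ q - 2) (by linarith : (0 : ℤ) ≤ x * y - q - 1),
      mul_nonneg (by linarith : (0 : ℤ) ≤ q) (by linarith : (0 : ℤ) ≤ x + y - 3)]
  nlinarith [mul_pos (by positivity : (0 : ℤ) < x * y) key]

lemma exists_ne_zero_mul_lineEnergy_lt [Fintype F] {A B : Finset F}
    (h : Fintype.card F < #A * #B) :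
    ∃ ξ : F, ξ ≠ 0 ∧ Fintype.card F * lineEnergy A B ξ < 2 * (#A * #B) ^ 2 := by
  by_contra! hbad
  have hsum := sum_le_sum (s := univ.erase 0) fun ξ hξ ↦ hbad ξ (ne_of_mem_erase hξ)
  rw [sum_const, card_erase_of_mem (mem_univ _), card_univ, smul_eq_mul, ← mul_sum] at hsum
  have := hsum.trans (Nat.mul_le_mul_left _ (sum_lineEnergy_le A B))
  rw [offDiag_card, offDiag_card] at this
  exact this.not_gt (card_mul_energy_sum_bound_lt Fintype.one_lt_card h)

theorem exists_ne_zero_card_lt_two_mul_card_add_smul_and_sub_smul [Fintype F] {A B : Finset F}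
    (h : Fintype.card F < #A * #B) :
    ∃ ξ : F, ξ ≠ 0 ∧ Fintype.card F < 2 * #(A + ξ • B) ∧ Fintype.card F < 2 * #(A - ξ • B) := by
  obtain ⟨ξ, hξ, hE⟩ := exists_ne_zero_mul_lineEnergy_lt h
  have of_sq_le {n : ℕ} (hn : (#A * #B) ^ 2 ≤ n * lineEnergy A B ξ) : Fintype.card F < 2 * n := by
    by_contra! hle
    have := Nat.mul_le_mul_right (lineEnergy A B ξ) hle
    nlinarith
  exact ⟨ξ, hξ, of_sq_le (sq_card_mul_card_le_card_add_smul_mul_lineEnergy hξ A B),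
    of_sq_le (sq_card_mul_card_le_card_sub_smul_mul_lineEnergy hξ A B)⟩

end Finset

theorem stmt_2_general {F : Type*} [Field F] [Fintype F]
    (A B : Set F)
    (h : A.ncard * B.ncard > Fintype.card F) :
    ∃ ξ : F, ξ ≠ 0 ∧
      ((A + ξ • B).ncard : ℝ) > (Fintype.card F : ℝ) / 2 ∧
      ((A - ξ • B).ncard : ℝ) > (Fintype.card F : ℝ) / 2 := by
  classical
  obtain ⟨A, rfl⟩ := A.toFinite.exists_finset_coe
  obtain ⟨B, rfl⟩ := B.toFinite.exists_finset_coe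
  rw [Set.ncard_coe_finset, Set.ncard_coe_finset] at h
  obtain ⟨ξ, hξ, hadd, hsub⟩ := exists_ne_zero_card_lt_two_mul_card_add_smul_and_sub_smul h
  have half_lt {n : ℕ} (hn : Fintype.card F < 2 * n) : (Fintype.card F : ℝ) / 2 < n := by
    rw [div_lt_iff₀ two_pos, mul_comm]
    exact_mod_cast hn
  refine ⟨ξ, hξ, ?_, ?_⟩
  · rw [← coe_smul_finset, ← coe_add, Set.ncard_coe_finset]
    exact half_lt hadd
  · rw [← coe_smul_finset, ← coe_sub, Set.ncard_coe_finset]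
    exact half_lt hsub

theorem stmt_2 {F : Type*} [Field F] [Fintype F]
    (A B : Set F) (hA : A.Nonempty) (hB : B.Nonempty)
    (h : A.ncard * B.ncard > Fintype.card F) :
    ∃ ξ : F, ξ ≠ 0 ∧
      ((A + ξ • B).ncard : ℝ) > (Fintype.card F : ℝ) / 2 ∧
      ((A - ξ • B).ncard : ℝ) > (Fintype.card F : ℝ) / 2 :=
  stmt_2_general A B h
end

section
/- Let q be a prime power, A, B ⊆ F_q, and ξ ∈ F_q \ {0}. If |A + ξ·B| < |A||B|, then |I(A,B)| ≥ |A + ξ·B|, where I(A,B) = {(b₁-b₂)·a₁ + (a₂-a₃)·b₃ : a₁,a₂,a₃ ∈ A, b₁,b₂,b₃ ∈ B}. -/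
open Pointwise

theorem stmt_3 {F : Type*} [Field F] [Fintype F]
    (A B : Set F) (ξ : F) (hξ : ξ ≠ 0)
    (h : (A + ξ • B).ncard < A.ncard * B.ncard) :
    ({x : F | ∃ a₁ ∈ A, ∃ a₂ ∈ A, ∃ a₃ ∈ A, ∃ b₁ ∈ B, ∃ b₂ ∈ B, ∃ b₃ ∈ B,
        x = (b₁ - b₂) * a₁ + (a₂ - a₃) * b₃}).ncard ≥ (A + ξ • B).ncard := by
  have himg : (fun p : F × F => p.1 + ξ * p.2) '' (A ×ˢ B) = A + ξ • B := by
    ext x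
    simp only [Set.mem_image, Set.mem_prod, Set.mem_add, Set.mem_smul_set]
    constructor
    · rintro ⟨⟨a, b⟩, ⟨ha, hb⟩, rfl⟩
      exact ⟨a, ha, ξ * b, ⟨b, hb, rfl⟩, rfl⟩
    · rintro ⟨a, ha, _, ⟨b, hb, rfl⟩, rfl⟩
      exact ⟨(a, b), ⟨ha, hb⟩, rfl⟩
  have hprod : (A ×ˢ B).ncard = A.ncard * B.ncard := by
    have := Nat.card_congr (Equiv.Set.prod A B)
    rw [Nat.card_prod] at this
    simpa [Nat.card_coe_set_eq] using this
  have hnot : ¬ Set.InjOn (fun p : F × F => p.1 + ξ * p.2) (A ×ˢ B) := by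
    intro hinj
    have hc := Set.ncard_image_of_injOn hinj
    rw [himg, hprod] at hc
    omega
  simp only [Set.InjOn, not_forall] at hnot
  obtain ⟨⟨a, b⟩, ⟨ha, hb⟩, ⟨a', b'⟩, ⟨ha', hb'⟩, heq, hne⟩ := hnot
  simp only at heq
  have hbne : b' - b ≠ 0 := by
    intro hbb
    have hb0 : b = b' := by linear_combination -hbb
    apply hne
    have : a = a' := by
      have := heq
      rw [hb0] at this
      exact add_right_cancel this
    simp [this, hb0]
  set c : F := b' - b with hc
  have hxc : a - a' = ξ * c := by
    have : a + ξ * b = a' + ξ * b' := heq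
    ring_nf
    linear_combination this
  have hsub : (fun x => c * x) '' (A + ξ • B) ⊆
      {x : F | ∃ a₁ ∈ A, ∃ a₂ ∈ A, ∃ a₃ ∈ A, ∃ b₁ ∈ B, ∃ b₂ ∈ B, ∃ b₃ ∈ B,
        x = (b₁ - b₂) * a₁ + (a₂ - a₃) * b₃} := by
    rintro y ⟨x, hx, rfl⟩
    rw [← himg] at hx
    obtain ⟨⟨a₁, b₃⟩, ⟨ha₁, hb₃⟩, rfl⟩ := hx
    exact ⟨a₁, ha₁, a, ha, a', ha', b', hb', b, hb, b₃, hb₃, by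
      simp only
      linear_combination (-b₃) * hxc⟩
  calc (A + ξ • B).ncard = ((fun x => c * x) '' (A + ξ • B)).ncard := by
        rw [Set.ncard_image_of_injective _ (mul_right_injective₀ hbne)]
    _ ≤ _ := Set.ncard_le_ncard hsub (Set.toFinite _)
end

section
/- Let B be a subset of F_q with |B| ≥ 2. Then either |B + B| ≥ (3/2)|B|, or there exists an additive subgroup G of F_q and an element b ∈ B such that B ⊆ b + G, |B| > (2/3)|G|, and B + B = 2b + G. -/
/-!
If `|B + B| < 3/2 |B|`, then every element of `B - B` has more than `|B|/2` representations as a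
difference, so any two of these representation sets meet inside `B`; this makes `B - B` a subgroup
`H`, and the same pigeonhole argument gives `B + B = 2b + H` for every `b ∈ B`, whence
`|H| = |B + B| < 3/2 |B|`. Mathlib proves this (Tointon, Theorem 2.2.1) for finsets in a
multiplicative group; we transfer it through `Multiplicative`.
-/

open Pointwise

namespace Finset

variable {α : Type*} [AddCommGroup α] [DecidableEq α] {A : Finset α} {a : α}

private def toMul (A : Finset α) : Finset (Multiplicative α) :=
  A.map Multiplicative.ofAdd.toEmbedding

omit [AddCommGroup α] [DecidableEq α] in
private lemma card_toMul (A : Finset α) : #(toMul A) = #A := card_map _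

omit [AddCommGroup α] [DecidableEq α] in
private lemma toMul_injective : Function.Injective (toMul (α := α)) := map_injective _

omit [AddCommGroup α] [DecidableEq α] in
private lemma mem_toMul {x : α} : Multiplicative.ofAdd x ∈ toMul A ↔ x ∈ A := by
  simp [toMul]

private lemma toMul_add (A B : Finset α) : toMul (A + B) = toMul A * toMul B := by
  ext x
  simp [toMul, mem_add, mem_mul, ← ofAdd_add, ← Equiv.eq_symm_apply]

private lemma toMul_neg (A : Finset α) : toMul (-A) = (toMul A)⁻¹ := by
  ext x
  simp [toMul]

private lemma toMul_sub_self (A : Finset α) : toMul (A - A) = (toMul A)⁻¹ * toMul A := by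
  rw [sub_eq_add_neg, add_comm, toMul_add, toMul_neg]

private lemma toMul_vadd (a : α) (A : Finset α) :
    toMul (a +ᵥ A) = Multiplicative.ofAdd a • toMul A := by
  ext x
  simp [toMul, mem_vadd_finset, mem_smul_finset, ← ofAdd_add, ← Equiv.eq_symm_apply]

private lemma doubling_toMul (h : #(A + A) < (3 / 2 : ℚ) * #A) :
    #(toMul A * toMul A) < (3 / 2 : ℚ) * #(toMul A) := by
  rwa [← toMul_add, card_toMul, card_toMul]

lemma nonempty_of_doubling_lt_three_halves (h : #(A + A) < (3 / 2 : ℚ) * #A) : A.Nonempty := by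
  rw [nonempty_iff_ne_empty]
  rintro rfl
  simp at h

lemma exists_addSubgroup_eq_sub_of_doubling_lt_three_halves (h : #(A + A) < (3 / 2 : ℚ) * #A) :
    ∃ H : AddSubgroup α, (H : Set α) = ↑(A - A) := by
  refine ⟨(invMulSubgroup (toMul A) (doubling_toMul h)).toAddSubgroup', Set.ext fun x => ?_⟩
  rw [SetLike.mem_coe, Subgroup.mem_toAddSubgroup', ← SetLike.mem_coe, invMulSubgroup_eq_inv_mul,
    ← coe_mul, ← toMul_sub_self, mem_coe, mem_coe]
  exact mem_toMul

lemma card_sub_of_doubling_lt_three_halves (h : #(A + A) < (3 / 2 : ℚ) * #A) :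
    #(A - A) = #(A + A) := by
  rw [← card_toMul, ← card_toMul (A + A), toMul_sub_self, toMul_add]
  exact card_inv_mul_of_doubling_lt_three_halves (doubling_toMul h)

lemma vadd_sub_of_doubling_lt_three_halves (h : #(A + A) < (3 / 2 : ℚ) * #A) (ha : a ∈ A) :
    (a + a) +ᵥ (A - A) = A + A := by
  -- the implicit group must be given: leaving it to unification times out
  have key := @smul_inv_mul_opSMul_eq_mul_of_doubling_lt_three_halves (Multiplicative α) _ _
    (toMul A) _ (doubling_toMul h) (mem_toMul.2 ha)
  apply toMul_injective
  rw [toMul_vadd, toMul_add, toMul_sub_self, ofAdd_add, mul_smul, ← key, op_smul_eq_smul]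

lemma subset_vadd_sub (ha : a ∈ A) : A ⊆ a +ᵥ (A - A) := fun x hx =>
  mem_vadd_finset.2 ⟨x - a, sub_mem_sub hx ha, by rw [vadd_eq_add, add_sub_cancel]⟩

end Finset

open Finset in
theorem stmt_10_general {F : Type*} [Field F] [Fintype F]
    (B : Set F) :
    ((B + B).ncard : ℝ) ≥ 3 / 2 * B.ncard ∨
      ∃ G : AddSubgroup F, ∃ b ∈ B, B ⊆ {b} + (G : Set F) ∧
        (B.ncard : ℝ) > 2 / 3 * ((G : Set F).ncard : ℝ) ∧
        B + B = {2 * b} + (G : Set F) := by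
  classical
  refine or_iff_not_imp_left.2 fun hsmall => ?_
  lift B to Finset F using B.toFinite
  rw [← coe_add, Set.ncard_coe_finset, Set.ncard_coe_finset] at hsmall
  have h : #(B + B) < (3 / 2 : ℚ) * #B := by
    rify
    exact lt_of_not_ge hsmall
  obtain ⟨b, hb⟩ := nonempty_of_doubling_lt_three_halves h
  obtain ⟨G, hG⟩ := exists_addSubgroup_eq_sub_of_doubling_lt_three_halves h
  have singleton_add_eq_vadd (c : F) (s : Finset F) : {c} + (s : Set F) = ↑(c +ᵥ s) := by
    rw [coe_vadd_finset, Set.singleton_add]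
    rfl
  refine ⟨G, b, hb, ?_, ?_, ?_⟩
  · rw [hG, singleton_add_eq_vadd]
    exact_mod_cast subset_vadd_sub hb
  · rw [hG, Set.ncard_coe_finset, Set.ncard_coe_finset, card_sub_of_doubling_lt_three_halves h]
    rify at h
    linarith
  · rw [hG, singleton_add_eq_vadd, two_mul, vadd_sub_of_doubling_lt_three_halves h hb, coe_add]

theorem stmt_10 {F : Type*} [Field F] [Fintype F]
    (B : Set F) (hB : 2 ≤ B.ncard) :
    ((B + B).ncard : ℝ) ≥ 3 / 2 * B.ncard ∨
      ∃ G : AddSubgroup F, ∃ b ∈ B, B ⊆ {b} + (G : Set F) ∧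
        (B.ncard : ℝ) > 2 / 3 * ((G : Set F).ncard : ℝ) ∧
        B + B = {2 * b} + (G : Set F) :=
  stmt_10_general B
end

section
/- Let q = p^m with p prime and m ≥ 2, let ξ be a primitive element of F_q, and let k, l ≥ 1 with k + l = m. Define A to be the set of F_p-linear combinations of 1, ξ, ..., ξ^{k-1}, and B the set of F_p-linear combinations of 1, ξ, ..., ξ^{l-1}. Then |A||B| = q and the product set AB is contained in the F_p-span of 1, ξ, ..., ξ^{m-2}, which is a proper additive subgroup of F_q; hence NAB ≠ F_q for every N ≥ 1. -/
/-!
Identify `A`, `B` and `C` with the `𝔽_p`-spans of `1, ξ, …, ξ^(n-1)` for `n = k, l, m - 1`.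
Since `ξ` generates `𝔽_q`, its minimal polynomial has degree `m`, so powers `ξ^i` with `i < m` are
linearly independent: these spans have dimension `n` and hence `p^n` elements. Products of
monomials of degrees `< k` and `< l` have degree `≤ m - 2`, so `AB` lies in the span `C`, a
subspace of dimension `m - 1 < m`; being closed under addition, `C` also contains every `NAB`.
-/

open Pointwise

open Module Submodule

theorem finrank_eq_of_card_eq_pow {K V : Type*} [Field K] [Fintype K] [AddCommGroup V]
    [Module K V] [Fintype V] {m : ℕ} (h : Fintype.card V = Fintype.card K ^ m) :
    finrank K V = m :=
  (Nat.pow_right_injective Fintype.one_lt_card ((card_eq_pow_finrank (K := K)).symm.trans h))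

theorem natDegree_minpoly_eq_finrank_of_forall_exists_pow {K L : Type*} [Field K] [Field L]
    [Algebra K L] [FiniteDimensional K L] {ξ : L} (hξ : ∀ y : L, y ≠ 0 → ∃ n : ℕ, ξ ^ n = y) :
    (minpoly K ξ).natDegree = finrank K L := by
  have hadj : Algebra.adjoin K {ξ} = ⊤ := by
    refine eq_top_iff.2 fun y _ => ?_
    obtain rfl | hy := eq_or_ne y 0
    · exact (Algebra.adjoin K {ξ}).zero_mem
    · obtain ⟨n, rfl⟩ := hξ y hy
      exact (Algebra.adjoin K {ξ}).pow_mem (Algebra.self_mem_adjoin_singleton K ξ) n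
  rw [← IntermediateField.adjoin.finrank (IsIntegral.of_finite K ξ),
    IntermediateField.adjoin_eq_top_of_algebra K {ξ} hadj, IntermediateField.finrank_top']

section PowSpan

variable (K : Type*) {L : Type*} [Field K] [CommRing L] [Algebra K L]

def powSpan (ξ : L) (n : ℕ) : Submodule K L :=
  span K (Set.range fun i : Fin n => ξ ^ (i : ℕ))

instance (ξ : L) (n : ℕ) : Module.Finite K (powSpan K ξ n) :=
  Module.Finite.span_of_finite K (Set.finite_range _)

variable {K}

theorem coe_powSpan (ξ : L) (n : ℕ) :
    (powSpan K ξ n : Set L) =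
      {x : L | ∃ c : Fin n → K, x = ∑ i, algebraMap K L (c i) * ξ ^ (i : ℕ)} := by
  ext x
  simp only [SetLike.mem_coe, powSpan, mem_span_range_iff_exists_fun, ← Algebra.smul_def,
    Set.mem_ofPred_eq, eq_comm]

theorem pow_mem_powSpan (ξ : L) {n j : ℕ} (hj : j < n) : ξ ^ j ∈ powSpan K ξ n :=
  subset_span ⟨⟨j, hj⟩, rfl⟩

theorem powSpan_mul_powSpan_le (ξ : L) (k l : ℕ) :
    powSpan K ξ k * powSpan K ξ l ≤ powSpan K ξ (k + l - 1) := by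
  rw [powSpan, powSpan, span_mul_span, span_le]
  rintro _ ⟨_, ⟨i, rfl⟩, _, ⟨j, rfl⟩, rfl⟩
  dsimp only
  rw [← pow_add]
  exact pow_mem_powSpan ξ (by omega)

theorem finrank_powSpan (ξ : L) {n : ℕ} (hn : n ≤ (minpoly K ξ).natDegree) :
    finrank K (powSpan K ξ n) = n := by
  have hli : LinearIndependent K fun i : Fin n => ξ ^ (i : ℕ) :=
    (linearIndependent_pow ξ).comp (Fin.castLE hn) (Fin.castLE_injective hn)
  rw [powSpan, finrank_span_eq_card hli, Fintype.card_fin]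

theorem ncard_powSpan [Finite K] (ξ : L) {n : ℕ} (hn : n ≤ (minpoly K ξ).natDegree) :
    (powSpan K ξ n : Set L).ncard = Nat.card K ^ n := by
  rw [← Nat.card_coe_set_eq, SetLike.coe_sort_coe, natCard_eq_pow_finrank (K := K),
    finrank_powSpan ξ hn]

end PowSpan

theorem stmt_19_general {F : Type*} [Field F] [Fintype F]
    (p m k l : ℕ) [Fact p.Prime] [CharP F p]
    (hq : Fintype.card F = p ^ m)
    (hkl : k + l = m)
    (ξ : F) (hξ : ∀ y : F, y ≠ 0 → ∃ n : ℕ, ξ ^ n = y)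
    (A : Set F) (hA : A = {x : F | ∃ c : Fin k → ZMod p,
      x = ∑ i, (ZMod.castHom (dvd_refl p) F (c i)) * ξ ^ (i : ℕ)})
    (B : Set F) (hB : B = {x : F | ∃ c : Fin l → ZMod p,
      x = ∑ i, (ZMod.castHom (dvd_refl p) F (c i)) * ξ ^ (i : ℕ)})
    (C : Set F) (hC : C = {x : F | ∃ c : Fin (m - 1) → ZMod p,
      x = ∑ i, (ZMod.castHom (dvd_refl p) F (c i)) * ξ ^ (i : ℕ)}) :
    A.ncard * B.ncard = p ^ m ∧ A * B ⊆ C ∧ C ≠ Set.univ ∧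
      ∀ N : ℕ, 1 ≤ N →
        {x : F | ∃ a : Fin N → F, ∃ b : Fin N → F,
          (∀ i, a i ∈ A ∧ b i ∈ B) ∧ x = ∑ i, a i * b i} ≠ Set.univ := by
  let := ZMod.algebra F p
  have hcast : ZMod.castHom (dvd_refl p) F = algebraMap (ZMod p) F := Subsingleton.elim _ _
  rw [hcast, ← coe_powSpan] at hA hB hC
  subst hA hB hC
  have hfin : finrank (ZMod p) F = m := finrank_eq_of_card_eq_pow (by rw [hq, ZMod.card])
  have hdeg : (minpoly (ZMod p) ξ).natDegree = m := by
    rw [natDegree_minpoly_eq_finrank_of_forall_exists_pow hξ, hfin]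
  have hAB : (powSpan (ZMod p) ξ k : Set F) * powSpan (ZMod p) ξ l ⊆ powSpan (ZMod p) ξ (m - 1) :=
    (mul_subset_mul _ _).trans (hkl ▸ powSpan_mul_powSpan_le ξ k l)
  have hC : (powSpan (ZMod p) ξ (m - 1) : Set F) ≠ Set.univ := by
    rw [Ne, coe_eq_univ]
    intro htop
    have hdim := finrank_powSpan (K := ZMod p) ξ (n := m - 1) (by omega)
    rw [htop, finrank_top, hfin] at hdim
    have : 0 < m := hfin ▸ finrank_pos
    omega
  refine ⟨?_, hAB, hC, fun N _ h => hC (Set.univ_subset_iff.1 (h ▸ ?_))⟩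
  · rw [ncard_powSpan ξ (by omega), ncard_powSpan ξ (by omega), Nat.card_zmod, ← pow_add, hkl]
  · rintro _ ⟨a, b, hab, rfl⟩
    exact sum_mem fun i _ => hAB (Set.mul_mem_mul (hab i).1 (hab i).2)

theorem stmt_19 {F : Type*} [Field F] [Fintype F]
    (p m k l : ℕ) [Fact p.Prime] [CharP F p]
    (hq : Fintype.card F = p ^ m) (hm : 2 ≤ m)
    (hk : 1 ≤ k) (hl : 1 ≤ l) (hkl : k + l = m)
    (ξ : F) (hξ : ∀ y : F, y ≠ 0 → ∃ n : ℕ, ξ ^ n = y)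
    (A : Set F) (hA : A = {x : F | ∃ c : Fin k → ZMod p,
      x = ∑ i, (ZMod.castHom (dvd_refl p) F (c i)) * ξ ^ (i : ℕ)})
    (B : Set F) (hB : B = {x : F | ∃ c : Fin l → ZMod p,
      x = ∑ i, (ZMod.castHom (dvd_refl p) F (c i)) * ξ ^ (i : ℕ)})
    (C : Set F) (hC : C = {x : F | ∃ c : Fin (m - 1) → ZMod p,
      x = ∑ i, (ZMod.castHom (dvd_refl p) F (c i)) * ξ ^ (i : ℕ)}) :
    A.ncard * B.ncard = p ^ m ∧ A * B ⊆ C ∧ C ≠ Set.univ ∧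
      ∀ N : ℕ, 1 ≤ N →
        {x : F | ∃ a : Fin N → F, ∃ b : Fin N → F,
          (∀ i, a i ∈ A ∧ b i ∈ B) ∧ x = ∑ i, a i * b i} ≠ Set.univ :=
  stmt_19_general p m k l hq hkl ξ hξ A hA B hB C hC
end
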